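/- Let Ω ⊂ ℂ be a simply connected domain, let F, G : Ω → ℂ be holomorphic with F and G nonvanishing on Ω, and fix z₀ ∈ Ω. Define X_max(z) = Re ∫_{z₀}^z ((1 + G²)F, i(1 − G²)F, −2GF) dw (the Weierstrass-type representation of a maximal surface in Lorentz–Minkowski space 𝕃³, regarded as a map into ℝ³), X₁(z) = Re ∫_{z₀}^z (F, iF, −GF) dw, and X₂(z) = Re ∫_{z₀}^z (FG², iFG², −FG) dw. Then X_max = X₁ + B X₂ on Ω, where B = diag(1, −1, 1), and both X₁ and X₂ are harmonic immersions of Ω into ℝ³. -/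

import Mathlib

/-!
Since `Ω` is connected, the three coordinate primitives of `X_max` are determined by their
derivatives and their values at `z₀`, and `(1 ± G²)F = F ± FG²` gives `X_max = X₁ + B X₂`.
Real parts of holomorphic functions are harmonic. The real differential of `Re f` at `z` is
`v ↦ Re (f'(z) v)`; when the first two derivatives are `c` and `I c` with `c ≠ 0`, the first two
components of the differential are `Re (c v)` and `-Im (c v)`, so it is injective. This applies to
`X₁` with `c = F` and to `X₂` with `c = FG²`.
-/

/-- Partial derivative of a real-valued function on `ℂ ≅ ℝ²` in direction `v`. -/
noncomputable def pd (v : ℂ) (f : ℂ → ℝ) (z : ℂ) : ℝ := fderiv ℝ f z v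

/-- A real-valued function is harmonic on `Ω` if it is `C²` there and satisfies
Laplace's equation `h_xx + h_yy = 0` (derivatives in directions `1` and `I`). -/
def HarmonicOnSet (f : ℂ → ℝ) (Ω : Set ℂ) : Prop :=
  ContDiffOn ℝ 2 f Ω ∧
    ∀ z ∈ Ω, pd 1 (pd 1 f) z + pd Complex.I (pd Complex.I f) z = 0

/-- The diagonal linear map `B = diag(1,-1,1)` on `ℝ³ ≅ ℝ × ℝ × ℝ`. -/
def BdiagR : ℝ × ℝ × ℝ → ℝ × ℝ × ℝ := fun v => (v.1, -v.2.1, v.2.2)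

open Complex

theorem eqOn_of_hasDerivAt {𝕜 E : Type*} [RCLike 𝕜] [NormedAddCommGroup E] [NormedSpace 𝕜 E]
    {s : Set 𝕜} (hs : IsOpen s) (hs' : IsPreconnected s) {f g f' : 𝕜 → E}
    (hf : ∀ x ∈ s, HasDerivAt f (f' x) x) (hg : ∀ x ∈ s, HasDerivAt g (f' x) x)
    {x₀ : 𝕜} (hx₀ : x₀ ∈ s) (hfg : f x₀ = g x₀) : s.EqOn f g :=
  hs.eqOn_of_deriv_eq hs' (fun x hx => (hf x hx).differentiableAt.differentiableWithinAt)
    (fun x hx => (hg x hx).differentiableAt.differentiableWithinAt)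
    (fun x hx => (hf x hx).deriv.trans (hg x hx).deriv.symm) hx₀ hfg

theorem hasFDerivAt_re_comp {f : ℂ → ℂ} {c z : ℂ} (h : HasDerivAt f c z) :
    HasFDerivAt (fun w => (f w).re)
      (reCLM.comp (((1 : ℂ →L[ℂ] ℂ).smulRight c).restrictScalars ℝ)) z :=
  reCLM.hasFDerivAt.comp z (h.hasFDerivAt.restrictScalars ℝ)

theorem fderiv_re_comp_apply {f : ℂ → ℂ} {c z : ℂ} (h : HasDerivAt f c z) (v : ℂ) :
    fderiv ℝ (fun w => (f w).re) z v = (c * v).re := by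
  simp [(hasFDerivAt_re_comp h).fderiv, mul_comm]

theorem pd_pd_re_eq {Ω : Set ℂ} (hΩ : IsOpen Ω) {f : ℂ → ℂ} (hf : DifferentiableOn ℂ f Ω)
    {z : ℂ} (hz : z ∈ Ω) (v : ℂ) :
    pd v (pd v fun w => (f w).re) z = (deriv (deriv f) z * v * v).re := by
  have hf' : AnalyticOnNhd ℂ f Ω := hf.analyticOnNhd hΩ
  have hpd : pd v (fun w => (f w).re) =ᶠ[nhds z] fun w => (deriv f w * v).re := by
    filter_upwards [hΩ.mem_nhds hz] with w hw
    exact fderiv_re_comp_apply (hf' w hw).differentiableAt.hasDerivAt v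
  rw [pd, hpd.fderiv_eq]
  exact fderiv_re_comp_apply ((hf'.deriv z hz).differentiableAt.hasDerivAt.mul_const v) v

theorem harmonicOnSet_re {Ω : Set ℂ} (hΩ : IsOpen Ω) {f : ℂ → ℂ} (hf : DifferentiableOn ℂ f Ω) :
    HarmonicOnSet (fun z => (f z).re) Ω := by
  refine ⟨reCLM.contDiff.comp_contDiffOn ((hf.contDiffOn hΩ).restrict_scalars ℝ), fun z hz => ?_⟩
  rw [pd_pd_re_eq hΩ hf hz, pd_pd_re_eq hΩ hf hz, mul_assoc _ I I, I_mul_I]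
  simp

theorem injective_fderiv_re_triple {f₁ f₂ f₃ : ℂ → ℂ} {c c₃ z : ℂ} (hc : c ≠ 0)
    (h₁ : HasDerivAt f₁ c z) (h₂ : HasDerivAt f₂ (I * c) z) (h₃ : HasDerivAt f₃ c₃ z) :
    Function.Injective
      (fderiv ℝ (fun w => (((f₁ w).re, (f₂ w).re, (f₃ w).re) : ℝ × ℝ × ℝ)) z) := by
  rw [((hasFDerivAt_re_comp h₁).prodMk
    ((hasFDerivAt_re_comp h₂).prodMk (hasFDerivAt_re_comp h₃))).fderiv]
  refine (injective_iff_map_eq_zero _).2 fun v hv => ?_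
  have hre : (c * v).re = 0 := by simpa [mul_comm] using congrArg Prod.fst hv
  have him : (c * v).im = 0 := by
    have h₂ : (v * (I * c)).re = 0 := congrArg (fun p => p.2.1) hv
    simp only [mul_re, I_re, I_im, mul_im] at h₂ ⊢
    linarith
  exact (mul_eq_zero.1 (Complex.ext hre him)).resolve_left hc

/-- `Mⱼ`, `Aⱼ`, `Bⱼ` are the primitives, vanishing at `z₀`, of the coordinates of the
Weierstrass-type integrands of `X_max`, `X₁`, `X₂` respectively. -/
theorem maximal_surface_superposition_general
    (Ω : Set ℂ) (hΩopen : IsOpen Ω) (hSC : SimplyConnectedSpace Ω)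
    (F G : ℂ → ℂ)
    (hFne : ∀ z ∈ Ω, F z ≠ 0) (hGne : ∀ z ∈ Ω, G z ≠ 0)
    (z₀ : ℂ) (hz₀ : z₀ ∈ Ω)
    (M₁ M₂ M₃ A₁ A₂ A₃ B₁ B₂ B₃ : ℂ → ℂ)
    (hM₁ : ∀ z ∈ Ω, HasDerivAt M₁ ((1 + G z ^ 2) * F z) z)
    (hM₂ : ∀ z ∈ Ω, HasDerivAt M₂ (Complex.I * (1 - G z ^ 2) * F z) z)
    (hM₃ : ∀ z ∈ Ω, HasDerivAt M₃ (-2 * G z * F z) z)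
    (hA₁ : ∀ z ∈ Ω, HasDerivAt A₁ (F z) z)
    (hA₂ : ∀ z ∈ Ω, HasDerivAt A₂ (Complex.I * F z) z)
    (hA₃ : ∀ z ∈ Ω, HasDerivAt A₃ (-(G z * F z)) z)
    (hB₁ : ∀ z ∈ Ω, HasDerivAt B₁ (F z * G z ^ 2) z)
    (hB₂ : ∀ z ∈ Ω, HasDerivAt B₂ (Complex.I * F z * G z ^ 2) z)
    (hB₃ : ∀ z ∈ Ω, HasDerivAt B₃ (-(F z * G z)) z)
    (hM₁0 : M₁ z₀ = 0) (hM₂0 : M₂ z₀ = 0) (hM₃0 : M₃ z₀ = 0)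
    (hA₁0 : A₁ z₀ = 0) (hA₂0 : A₂ z₀ = 0) (hA₃0 : A₃ z₀ = 0)
    (hB₁0 : B₁ z₀ = 0) (hB₂0 : B₂ z₀ = 0) (hB₃0 : B₃ z₀ = 0) :
    (∀ z ∈ Ω,
      (((M₁ z).re, (M₂ z).re, (M₃ z).re) : ℝ × ℝ × ℝ)
        = (((A₁ z).re, (A₂ z).re, (A₃ z).re) : ℝ × ℝ × ℝ)
          + BdiagR ((B₁ z).re, (B₂ z).re, (B₃ z).re))
    ∧ HarmonicOnSet (fun z => (A₁ z).re) Ω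
    ∧ HarmonicOnSet (fun z => (A₂ z).re) Ω
    ∧ HarmonicOnSet (fun z => (A₃ z).re) Ω
    ∧ HarmonicOnSet (fun z => (B₁ z).re) Ω
    ∧ HarmonicOnSet (fun z => (B₂ z).re) Ω
    ∧ HarmonicOnSet (fun z => (B₃ z).re) Ω
    ∧ (∀ z ∈ Ω, Function.Injective
        (fderiv ℝ (fun w => (((A₁ w).re, (A₂ w).re, (A₃ w).re) : ℝ × ℝ × ℝ)) z))
    ∧ (∀ z ∈ Ω, Function.Injective
        (fderiv ℝ (fun w => (((B₁ w).re, (B₂ w).re, (B₃ w).re) : ℝ × ℝ × ℝ)) z)) := by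
  have hpre : IsPreconnected Ω := isPreconnected_iff_preconnectedSpace.2 inferInstance
  have e₁ : Ω.EqOn M₁ (A₁ + B₁) := eqOn_of_hasDerivAt hΩopen hpre hM₁
    (fun z hz => ((hA₁ z hz).add (hB₁ z hz)).congr_deriv (by ring)) hz₀
    (by simp [hM₁0, hA₁0, hB₁0])
  have e₂ : Ω.EqOn M₂ (A₂ - B₂) := eqOn_of_hasDerivAt hΩopen hpre hM₂
    (fun z hz => ((hA₂ z hz).sub (hB₂ z hz)).congr_deriv (by ring)) hz₀
    (by simp [hM₂0, hA₂0, hB₂0])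
  have e₃ : Ω.EqOn M₃ (A₃ + B₃) := eqOn_of_hasDerivAt hΩopen hpre hM₃
    (fun z hz => ((hA₃ z hz).add (hB₃ z hz)).congr_deriv (by ring)) hz₀
    (by simp [hM₃0, hA₃0, hB₃0])
  have harmonic {f : ℂ → ℂ} {f' : ℂ → ℂ} (hf : ∀ z ∈ Ω, HasDerivAt f (f' z) z) :
      HarmonicOnSet (fun z => (f z).re) Ω :=
    harmonicOnSet_re hΩopen fun z hz => (hf z hz).differentiableAt.differentiableWithinAt
  refine ⟨fun z hz => ?_, harmonic hA₁, harmonic hA₂, harmonic hA₃, harmonic hB₁, harmonic hB₂,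
    harmonic hB₃,
    fun z hz => injective_fderiv_re_triple (hFne z hz) (hA₁ z hz) (hA₂ z hz) (hA₃ z hz),
    fun z hz => injective_fderiv_re_triple (mul_ne_zero (hFne z hz) (pow_ne_zero 2 (hGne z hz)))
      (hB₁ z hz) ((hB₂ z hz).congr_deriv (mul_assoc _ _ _)) (hB₃ z hz)⟩
  simp [BdiagR, e₁ hz, e₂ hz, e₃ hz, sub_eq_add_neg]

/-- A maximal surface in Lorentz–Minkowski space decomposes as a superposition of
two harmonic immersions: `X_max = X₁ + B X₂`, where the `Mⱼ, Aⱼ, Bⱼ` are the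
primitives (vanishing at `z₀`) of the Weierstrass-type integrands of `X_max`,
`X₁`, `X₂` respectively. -/
theorem maximal_surface_superposition
    (Ω : Set ℂ) (hΩopen : IsOpen Ω) (hSC : SimplyConnectedSpace Ω)
    (F G : ℂ → ℂ)
    (hF : DifferentiableOn ℂ F Ω) (hG : DifferentiableOn ℂ G Ω)
    (hFne : ∀ z ∈ Ω, F z ≠ 0) (hGne : ∀ z ∈ Ω, G z ≠ 0)
    (z₀ : ℂ) (hz₀ : z₀ ∈ Ω)
    (M₁ M₂ M₃ A₁ A₂ A₃ B₁ B₂ B₃ : ℂ → ℂ)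
    (hM₁ : ∀ z ∈ Ω, HasDerivAt M₁ ((1 + G z ^ 2) * F z) z)
    (hM₂ : ∀ z ∈ Ω, HasDerivAt M₂ (Complex.I * (1 - G z ^ 2) * F z) z)
    (hM₃ : ∀ z ∈ Ω, HasDerivAt M₃ (-2 * G z * F z) z)
    (hA₁ : ∀ z ∈ Ω, HasDerivAt A₁ (F z) z)
    (hA₂ : ∀ z ∈ Ω, HasDerivAt A₂ (Complex.I * F z) z)
    (hA₃ : ∀ z ∈ Ω, HasDerivAt A₃ (-(G z * F z)) z)
    (hB₁ : ∀ z ∈ Ω, HasDerivAt B₁ (F z * G z ^ 2) z)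
    (hB₂ : ∀ z ∈ Ω, HasDerivAt B₂ (Complex.I * F z * G z ^ 2) z)
    (hB₃ : ∀ z ∈ Ω, HasDerivAt B₃ (-(F z * G z)) z)
    (hM₁0 : M₁ z₀ = 0) (hM₂0 : M₂ z₀ = 0) (hM₃0 : M₃ z₀ = 0)
    (hA₁0 : A₁ z₀ = 0) (hA₂0 : A₂ z₀ = 0) (hA₃0 : A₃ z₀ = 0)
    (hB₁0 : B₁ z₀ = 0) (hB₂0 : B₂ z₀ = 0) (hB₃0 : B₃ z₀ = 0) :
    (∀ z ∈ Ω,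
      (((M₁ z).re, (M₂ z).re, (M₃ z).re) : ℝ × ℝ × ℝ)
        = (((A₁ z).re, (A₂ z).re, (A₃ z).re) : ℝ × ℝ × ℝ)
          + BdiagR ((B₁ z).re, (B₂ z).re, (B₃ z).re))
    ∧ HarmonicOnSet (fun z => (A₁ z).re) Ω
    ∧ HarmonicOnSet (fun z => (A₂ z).re) Ω
    ∧ HarmonicOnSet (fun z => (A₃ z).re) Ω
    ∧ HarmonicOnSet (fun z => (B₁ z).re) Ω
    ∧ HarmonicOnSet (fun z => (B₂ z).re) Ω
    ∧ HarmonicOnSet (fun z => (B₃ z).re) Ω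
    ∧ (∀ z ∈ Ω, Function.Injective
        (fderiv ℝ (fun w => (((A₁ w).re, (A₂ w).re, (A₃ w).re) : ℝ × ℝ × ℝ)) z))
    ∧ (∀ z ∈ Ω, Function.Injective
        (fderiv ℝ (fun w => (((B₁ w).re, (B₂ w).re, (B₃ w).re) : ℝ × ℝ × ℝ)) z)) :=
  maximal_surface_superposition_general Ω hΩopen hSC F G hFne hGne z₀ hz₀ M₁ M₂ M₃ A₁ A₂ A₃ B₁ B₂ B₃
    hM₁ hM₂ hM₃ hA₁ hA₂ hA₃ hB₁ hB₂ hB₃ hM₁0 hM₂0 hM₃0 hA₁0 hA₂0 hA₃0 hB₁0 hB₂0 hB₃0
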